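/- arXiv:2310.16933 — 2 statements merged into one kernel-verified Lean document; each statement's English description precedes it below -/
import Mathlib

section
/- For any real numbers α > β > 0 and any q > 0: ∫₀^{α−β} e^{−t²/2}·(α−t)^{−q−1} dt ≤ (2β^{−q}/q)·e^{−(α−β)²/8} + (1/q)·(α/2)^{−q}. -/
open MeasureTheory

noncomputable section

private lemma rpow_integral_eval (α q a b : ℝ) (hq : 0 < q) (hab : a ≤ b)
    (hb : b < α) :
    (∫ t in a..b, (α - t) ^ (-q - 1)) = ((α - b) ^ (-q) - (α - a) ^ (-q)) / q := by
  have h1 : (∫ t in a..b, (α - t) ^ (-q - 1))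
      = ∫ x in (α - b)..(α - a), x ^ (-q - 1) :=
    intervalIntegral.integral_comp_sub_left (fun x => x ^ (-q - 1)) α
  rw [h1, integral_rpow]
  · rw [show (-q - 1) + 1 = -q by ring]
    rw [div_neg, ← neg_div, neg_sub]
  · right
    refine ⟨by linarith, ?_⟩
    intro h0
    rw [Set.uIcc_of_le (by linarith)] at h0
    have := h0.1
    linarith

private lemma contOn' (α q a b : ℝ) (hab : a ≤ b) (hb : b < α) :
    ContinuousOn (fun t : ℝ => (α - t) ^ (-q - 1)) (Set.uIcc a b) := by
  apply ContinuousOn.rpow_const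
  · exact (continuous_const.sub continuous_id).continuousOn
  · intro x hx
    left
    rw [Set.uIcc_of_le hab] at hx
    have hx2 := hx.2
    intro h
    have h2 : (0:ℝ) < α - x := by linarith
    rw [h] at h2
    linarith

private lemma contOn (α q a b : ℝ) (hab : a ≤ b) (hb : b < α) :
    ContinuousOn (fun t : ℝ => Real.exp (-t ^ 2 / 2) * (α - t) ^ (-q - 1))
      (Set.uIcc a b) :=
  ((Real.continuous_exp.comp (by continuity)).continuousOn).mul
    (contOn' α q a b hab hb)

/-- **Lemma C.1** (auxiliary Gaussian-tail integral estimate). -/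
theorem gaussian_tail_integral_bound (α β q : ℝ) (hβ : 0 < β) (hαβ : β < α)
    (hq : 0 < q) :
    (∫ t in Set.Icc (0:ℝ) (α - β), Real.exp (-t ^ 2 / 2) * (α - t) ^ (-q - 1)) ≤
      2 * β ^ (-q) / q * Real.exp (-(α - β) ^ 2 / 8) + (1 / q) * (α / 2) ^ (-q) := by
  set m : ℝ := (α - β) / 2 with hm
  have hαpos : 0 < α := by linarith
  have h0m : (0:ℝ) ≤ m := by rw [hm]; linarith
  have hmb : m ≤ α - β := by rw [hm]; linarith
  have hbα : α - β < α := by linarith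
  have hmα : m < α := lt_of_le_of_lt hmb hbα
  set f : ℝ → ℝ := fun t => Real.exp (-t ^ 2 / 2) * (α - t) ^ (-q - 1) with hf
  -- integrability
  have I1 : IntervalIntegrable f volume 0 m :=
    (contOn α q 0 m h0m hmα).intervalIntegrable
  have I2 : IntervalIntegrable f volume m (α - β) :=
    (contOn α q m (α - β) hmb hbα).intervalIntegrable
  have Ig1 : IntervalIntegrable (fun t => (α - t) ^ (-q - 1)) volume 0 m :=
    (contOn' α q 0 m h0m hmα).intervalIntegrable
  have Ig2 : IntervalIntegrable
      (fun t => Real.exp (-(α - β) ^ 2 / 8) * (α - t) ^ (-q - 1)) volume m (α - β) :=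
    (continuousOn_const.mul (contOn' α q m (α - β) hmb hbα)).intervalIntegrable
  -- convert set integral to interval integral
  have hconv : (∫ t in Set.Icc (0:ℝ) (α - β), f t) = ∫ t in (0:ℝ)..(α - β), f t := by
    rw [intervalIntegral.integral_of_le (by linarith), integral_Icc_eq_integral_Ioc]
  have hsplit : (∫ t in (0:ℝ)..(α - β), f t)
      = (∫ t in (0:ℝ)..m, f t) + ∫ t in m..(α - β), f t :=
    (intervalIntegral.integral_add_adjacent_intervals I1 I2).symm
  -- first piece
  have hpiece1 : (∫ t in (0:ℝ)..m, f t) ≤ (1 / q) * (α / 2) ^ (-q) := by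
    have hb1 : (∫ t in (0:ℝ)..m, f t) ≤ ∫ t in (0:ℝ)..m, (α - t) ^ (-q - 1) := by
      apply intervalIntegral.integral_mono_on h0m I1 Ig1
      intro t ht
      have ht2 : t ≤ m := ht.2
      have hpos : (0:ℝ) < α - t := by linarith
      have hexp : Real.exp (-t ^ 2 / 2) ≤ 1 := by
        rw [Real.exp_le_one_iff]
        nlinarith [sq_nonneg t]
      calc Real.exp (-t ^ 2 / 2) * (α - t) ^ (-q - 1)
          ≤ 1 * (α - t) ^ (-q - 1) := by
            apply mul_le_mul_of_nonneg_right hexp (Real.rpow_nonneg hpos.le _)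
        _ = (α - t) ^ (-q - 1) := one_mul _
    rw [rpow_integral_eval α q 0 m hq h0m hmα] at hb1
    have hαm : α / 2 ≤ α - m := by rw [hm]; linarith
    have h1 : (α - m) ^ (-q) ≤ (α / 2) ^ (-q) :=
      Real.rpow_le_rpow_of_nonpos (by linarith) hαm (by linarith)
    have h2 : (0:ℝ) ≤ (α - 0) ^ (-q) := Real.rpow_nonneg (by linarith) _
    calc (∫ t in (0:ℝ)..m, f t)
        ≤ ((α - m) ^ (-q) - (α - 0) ^ (-q)) / q := hb1
      _ ≤ (α / 2) ^ (-q) / q := by gcongr <;> linarith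
      _ = (1 / q) * (α / 2) ^ (-q) := by ring
  -- second piece
  have hpiece2 : (∫ t in m..(α - β), f t)
      ≤ 2 * β ^ (-q) / q * Real.exp (-(α - β) ^ 2 / 8) := by
    have hb2 : (∫ t in m..(α - β), f t)
        ≤ ∫ t in m..(α - β), Real.exp (-(α - β) ^ 2 / 8) * (α - t) ^ (-q - 1) := by
      apply intervalIntegral.integral_mono_on hmb I2 Ig2
      intro t ht
      have ht1 : m ≤ t := ht.1
      have ht2 : t ≤ α - β := ht.2
      have hpos : (0:ℝ) < α - t := by linarith
      have hexp : Real.exp (-t ^ 2 / 2) ≤ Real.exp (-(α - β) ^ 2 / 8) := by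
        apply Real.exp_le_exp.mpr
        have : (α - β) ^ 2 / 4 ≤ t ^ 2 := by
          have hmt : m ^ 2 ≤ t ^ 2 := by nlinarith
          rw [hm] at hmt
          nlinarith
        linarith
      exact mul_le_mul_of_nonneg_right hexp (Real.rpow_nonneg hpos.le _)
    rw [intervalIntegral.integral_const_mul,
      rpow_integral_eval α q m (α - β) hq hmb hbα] at hb2
    have hab : α - (α - β) = β := by ring
    rw [hab] at hb2
    have h3 : (0:ℝ) ≤ (α - m) ^ (-q) := Real.rpow_nonneg (by linarith) _
    have h4 : (0:ℝ) ≤ β ^ (-q) := Real.rpow_nonneg hβ.le _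
    have hE : (0:ℝ) ≤ Real.exp (-(α - β) ^ 2 / 8) := (Real.exp_pos _).le
    calc (∫ t in m..(α - β), f t)
        ≤ Real.exp (-(α - β) ^ 2 / 8) * ((β ^ (-q) - (α - m) ^ (-q)) / q) := hb2
      _ ≤ Real.exp (-(α - β) ^ 2 / 8) * (2 * β ^ (-q) / q) := by
          apply mul_le_mul_of_nonneg_left _ hE
          gcongr <;> linarith
      _ = 2 * β ^ (-q) / q * Real.exp (-(α - β) ^ 2 / 8) := by ring
  calc (∫ t in Set.Icc (0:ℝ) (α - β), f t)
      = (∫ t in (0:ℝ)..m, f t) + ∫ t in m..(α - β), f t := by rw [hconv, hsplit]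
    _ ≤ 2 * β ^ (-q) / q * Real.exp (-(α - β) ^ 2 / 8) + (1 / q) * (α / 2) ^ (-q) := by
        linarith
end
end

section
/- Let H be a separable Hilbert space, let T be a compact self-adjoint operator on H with eigendecomposition T = Σ_i λ_i ⟨φ_i, ·⟩φ_i for an orthonormal basis {φ_i} of eigenvectors, and let T⁺ := Σ_i (λ_i ∨ 0) ⟨φ_i, ·⟩φ_i be its positive part. Then for every positive semi-definite bounded self-adjoint operator C on H: ‖T⁺ − C‖ ≤ 2‖T − C‖, where ‖·‖ is the operator norm. -/
open MeasureTheory RealInnerProductSpace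

noncomputable section

/-- Positive part of a compact self-adjoint operator: if `C` is a positive semi-definite
bounded self-adjoint operator, then `‖T⁺ − C‖ ≤ 2‖T − C‖`. -/
theorem positive_part_approximation (H : Type) [NormedAddCommGroup H]
    [InnerProductSpace ℝ H] [CompleteSpace H] [TopologicalSpace.SeparableSpace H]
    (ι : Type) [Countable ι]
    (T Tp C : H →L[ℝ] H)
    (hTcompact : IsCompactOperator T) (hTsa : IsSelfAdjoint T)
    (b : HilbertBasis ι ℝ H) (ev : ι → ℝ)
    (hT : ∀ ψ : H, T ψ = ∑' i, (ev i * ⟪b i, ψ⟫) • b i)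
    (hTp : ∀ ψ : H, Tp ψ = ∑' i, (max (ev i) 0 * ⟪b i, ψ⟫) • b i)
    (hCsa : IsSelfAdjoint C) (hCpos : ∀ ψ : H, 0 ≤ ⟪C ψ, ψ⟫) :
    ‖Tp - C‖ ≤ 2 * ‖T - C‖ := by
  classical
  set M := ‖T - C‖ with hM
  have hM0 : 0 ≤ M := norm_nonneg _
  set g : ι → ℝ := fun i => max (ev i) 0 - ev i with hg
  have hbo : Orthonormal ℝ (b : ι → H) := b.orthonormal
  have hbn : ∀ i : ι, ‖(b i : H)‖ = 1 := hbo.1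
  have hbi : ∀ i j : ι, ⟪b i, b j⟫ = if i = j then (1:ℝ) else 0 := by
    intro i j
    by_cases h : i = j
    · rw [if_pos h, h, real_inner_self_eq_norm_sq, hbn j]; norm_num
    · rw [if_neg h]; exact hbo.2 h
  -- eigenvector equation
  have hTb : ∀ i : ι, T (b i) = ev i • b i := by
    intro i
    rw [hT (b i)]
    rw [tsum_eq_single i]
    · rw [hbi i i, if_pos rfl, mul_one]
    · intro j hj
      rw [hbi j i, if_neg hj, mul_zero, zero_smul]
  -- bound on g
  have hg0 : ∀ i, 0 ≤ g i := fun i => by simp [hg, le_max_left]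
  have hgM : ∀ i, g i ≤ M := by
    intro i
    have h1 : ⟪(T - C) (b i), b i⟫ = ev i - ⟪C (b i), b i⟫ := by
      rw [ContinuousLinearMap.sub_apply, inner_sub_left, hTb i, real_inner_smul_left,
        real_inner_self_eq_norm_sq, hbn i]
      ring
    have h2 : |⟪(T - C) (b i), b i⟫| ≤ M := by
      calc |⟪(T - C) (b i), b i⟫| ≤ ‖(T - C) (b i)‖ * ‖b i‖ := abs_real_inner_le_norm _ _
        _ ≤ (M * ‖b i‖) * ‖b i‖ := by
            gcongr; exact (T - C).le_opNorm _
        _ = M := by rw [hbn i]; ring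
    rcases le_or_gt 0 (ev i) with h | h
    · have : g i = 0 := by simp [hg, max_eq_left h]
      rw [this]; exact hM0
    · have hC := hCpos (b i)
      have h3 : ⟪(T - C) (b i), b i⟫ ≤ ev i := by linarith [h1, hC]
      have h4 : -ev i ≤ M := by
        have := abs_le.mp h2
        linarith
      have : g i = -ev i := by simp [hg, max_eq_right h.le]
      rw [this]; exact h4
  -- operator norm of T bounds eigenvalues
  have hevM : ∀ i, |ev i| ≤ ‖T‖ := by
    intro i
    have h := T.le_opNorm (b i)
    rw [hTb i, norm_smul, hbn i] at h
    simpa using h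
  have hTnn : 0 ≤ ‖T‖ := norm_nonneg _
  -- the key pointwise bound for Tp - T
  have key : ∀ ψ : H, ‖(Tp - T) ψ‖ ≤ M * ‖ψ‖ := by
    intro ψ
    have hc2 : Summable fun i => (⟪b i, ψ⟫ : ℝ) ^ 2 := by
      have h := b.summable_inner_mul_inner ψ ψ
      refine h.congr fun i => ?_
      rw [real_inner_comm ψ (b i)]; ring
    -- summability of coefficient families
    have hsummable : ∀ d : ι → ℝ, (∀ i, |d i| ≤ M + ‖T‖) →
        Summable fun i => (d i * ⟪b i, ψ⟫) • (b i : H) := by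
      intro d hd
      refine (hbo.orthogonalFamily.summable_iff_norm_sq_summable
        (fun i => d i * ⟪b i, ψ⟫)).mpr ?_
      refine Summable.of_nonneg_of_le (fun i => by positivity)
        (fun i => ?_) (hc2.mul_left ((M + ‖T‖) ^ 2))
      have h1 : d i ^ 2 ≤ (M + ‖T‖) ^ 2 := by
        have h := hd i
        have h' := abs_nonneg (d i)
        nlinarith [sq_abs (d i)]
      rw [Real.norm_eq_abs, sq_abs, mul_pow]
      exact mul_le_mul_of_nonneg_right h1 (sq_nonneg _)
    have hs1 : Summable fun i => (ev i * ⟪b i, ψ⟫) • (b i : H) :=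
      hsummable ev fun i => by linarith [hevM i]
    have hs2 : Summable fun i => (max (ev i) 0 * ⟪b i, ψ⟫) • (b i : H) := by
      refine hsummable (fun i => max (ev i) 0) fun i => ?_
      show |max (ev i) 0| ≤ M + ‖T‖
      rcases le_or_gt 0 (ev i) with h | h
      · rw [max_eq_left h, abs_of_nonneg h]; linarith [abs_le.mp (hevM i)]
      · rw [max_eq_right h.le, abs_of_nonneg le_rfl]; linarith
    have hs3 : Summable fun i => (g i * ⟪b i, ψ⟫) • (b i : H) := by
      refine (hs2.sub hs1).congr fun i => ?_
      rw [← sub_smul, ← sub_mul]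
    -- compute (Tp - T) ψ
    have hx : (Tp - T) ψ = ∑' i, (g i * ⟪b i, ψ⟫) • (b i : H) := by
      rw [ContinuousLinearMap.sub_apply, hTp ψ, hT ψ, ← Summable.tsum_sub hs2 hs1]
      refine tsum_congr fun i => ?_
      rw [← sub_smul, ← sub_mul]
    set x : H := (Tp - T) ψ with hxdef
    have hxsum : HasSum (fun i => (g i * ⟪b i, ψ⟫) • (b i : H)) x := by
      rw [hx]; exact hs3.hasSum
    -- coefficients of x
    have hxc : ∀ j : ι, ⟪b j, x⟫ = g j * ⟪b j, ψ⟫ := by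
      intro j
      have h1 : HasSum (fun i => ⟪b j, (g i * ⟪b i, ψ⟫) • (b i : H)⟫) ⟪b j, x⟫ :=
        hxsum.mapL (innerSL ℝ (b j))
      have h2 : ∀ i : ι, ⟪b j, (g i * ⟪b i, ψ⟫) • (b i : H)⟫ =
          if i = j then g j * ⟪b j, ψ⟫ else 0 := by
        intro i
        by_cases h : i = j
        · rw [if_pos h, h, real_inner_smul_right, hbi j j, if_pos rfl, mul_one]
        · rw [if_neg h, real_inner_smul_right, hbi j i, if_neg (Ne.symm h), mul_zero]
      have h3 := h1.tsum_eq
      rw [tsum_congr h2, tsum_eq_single j (fun i hi => by rw [if_neg hi]),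
        if_pos rfl] at h3
      exact h3.symm
    -- Parseval for x and ψ
    have hx2 : ‖x‖ ^ 2 = ∑' i, (g i * ⟪b i, ψ⟫) ^ 2 := by
      rw [← real_inner_self_eq_norm_sq, ← b.tsum_inner_mul_inner x x]
      refine tsum_congr fun i => ?_
      have h1 := hxc i
      have h2 : ⟪x, b i⟫ = g i * ⟪b i, ψ⟫ := by rw [real_inner_comm]; exact h1
      rw [h1, h2]; ring
    have hpsi2 : ‖ψ‖ ^ 2 = ∑' i, (⟪b i, ψ⟫ : ℝ) ^ 2 := by
      rw [← real_inner_self_eq_norm_sq, ← b.tsum_inner_mul_inner ψ ψ]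
      refine tsum_congr fun i => ?_
      rw [real_inner_comm ψ (b i)]; ring
    have hgc2 : Summable fun i => (g i * ⟪b i, ψ⟫) ^ 2 := by
      refine Summable.of_nonneg_of_le (fun i => sq_nonneg _)
        (fun i => ?_) (hc2.mul_left (M ^ 2))
      rw [mul_pow]
      have h1 : g i ^ 2 ≤ M ^ 2 := by nlinarith [hg0 i, hgM i]
      exact mul_le_mul_of_nonneg_right h1 (sq_nonneg _)
    have hle : ‖x‖ ^ 2 ≤ M ^ 2 * ‖ψ‖ ^ 2 := by
      rw [hx2, hpsi2, ← tsum_mul_left]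
      refine Summable.tsum_le_tsum (fun i => ?_) hgc2 (hc2.mul_left (M ^ 2))
      rw [mul_pow]
      have h1 : g i ^ 2 ≤ M ^ 2 := by nlinarith [hg0 i, hgM i]
      exact mul_le_mul_of_nonneg_right h1 (sq_nonneg _)
    have hfin : ‖x‖ ^ 2 ≤ (M * ‖ψ‖) ^ 2 := by rw [mul_pow]; exact hle
    have hnn : 0 ≤ M * ‖ψ‖ := mul_nonneg hM0 (norm_nonneg _)
    nlinarith [norm_nonneg x]
  have h1 : ‖Tp - T‖ ≤ M := ContinuousLinearMap.opNorm_le_bound _ hM0 key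
  have h2 : ‖Tp - C‖ ≤ ‖Tp - T‖ + ‖T - C‖ := by
    have h3 : Tp - C = (Tp - T) + (T - C) := by abel
    rw [h3]
    exact norm_add_le _ _
  linarith
end
end
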